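/- Let M₀ > 0 and K > 0, define U := ((K + √(K² + 4M₀))/2)² and q := K/(K + √(K² + 4M₀)). Let (a_t)_{t≥0} be a sequence of nonnegative real numbers with a₀ ≥ U and a_t ≤ M₀ + K·√(a_{t−1}) for all t ≥ 1. Then for every T ≥ 0, a_T ≤ U + q^T·(a₀ − U). -/

import Mathlib

/-!
Write `r = √U = (K + √(K² + 4M₀))/2` (`fixedPointRoot`), so that `r² ≥ M₀ + K r`
and `q = K/(2r)`. Concavity of the square root gives the tangent-line bound
`√u ≤ r + (u - r²)/(2r)`, hence `M₀ + K√u ≤ U + q (u - U)` for every `u ≥ 0`. The deviations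
`a_t - U` therefore satisfy `a_{t+1} - U ≤ q (a_t - U)` and are dominated by a geometric sequence.
-/

/-- The fixed point `U = ((K + √(K² + 4M₀))/2)²` of the map `u ↦ M₀ + K√u`. -/
noncomputable def fixedPointU (M₀ K : ℝ) : ℝ :=
  ((K + Real.sqrt (K ^ 2 + 4 * M₀)) / 2) ^ 2

/-- The contraction factor `q = K/(K + √(K² + 4M₀))`. -/
noncomputable def contractionQ (M₀ K : ℝ) : ℝ :=
  K / (K + Real.sqrt (K ^ 2 + 4 * M₀))

theorem Real.sqrt_le_add_sub_sq_div {r u : ℝ} (hr : 0 < r) (hu : 0 ≤ u) :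
    √u ≤ r + (u - r ^ 2) / (2 * r) := by
  rw [← sub_nonneg, show r + (u - r ^ 2) / (2 * r) - √u = (√u - r) ^ 2 / (2 * r) by
    field_simp; linear_combination -Real.sq_sqrt hu]
  positivity

theorem add_mul_sqrt_le_sq_add_mul_sub {M₀ K r u : ℝ} (hK : 0 ≤ K) (hr : 0 < r)
    (hr_sq : M₀ + K * r ≤ r ^ 2) (hu : 0 ≤ u) :
    M₀ + K * √u ≤ r ^ 2 + K / (2 * r) * (u - r ^ 2) :=
  calc M₀ + K * √u ≤ M₀ + K * (r + (u - r ^ 2) / (2 * r)) := by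
        gcongr; exact Real.sqrt_le_add_sub_sq_div hr hu
    _ = M₀ + K * r + K / (2 * r) * (u - r ^ 2) := by ring
    _ ≤ r ^ 2 + K / (2 * r) * (u - r ^ 2) := by gcongr

section FixedPoint

variable {M₀ K : ℝ}

noncomputable def fixedPointRoot (M₀ K : ℝ) : ℝ :=
  (K + √(K ^ 2 + 4 * M₀)) / 2

theorem fixedPointU_eq_sq (M₀ K : ℝ) : fixedPointU M₀ K = fixedPointRoot M₀ K ^ 2 := rfl

theorem contractionQ_eq_div (M₀ K : ℝ) :
    contractionQ M₀ K = K / (2 * fixedPointRoot M₀ K) := by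
  rw [contractionQ, fixedPointRoot, mul_div_cancel₀ _ two_ne_zero]

theorem fixedPointRoot_pos (hK : 0 < K) : 0 < fixedPointRoot M₀ K := by
  unfold fixedPointRoot; positivity

theorem add_mul_fixedPointRoot_le_sq :
    M₀ + K * fixedPointRoot M₀ K ≤ fixedPointRoot M₀ K ^ 2 := by
  have h_disc : K ^ 2 + 4 * M₀ ≤ √(K ^ 2 + 4 * M₀) ^ 2 := by
    rcases le_total 0 (K ^ 2 + 4 * M₀) with h | h
    · rw [Real.sq_sqrt h]
    · exact h.trans (sq_nonneg _)
  unfold fixedPointRoot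
  nlinarith

theorem add_mul_sqrt_le_fixedPointU_add (hK : 0 < K) {u : ℝ} (hu : 0 ≤ u) :
    M₀ + K * √u ≤ fixedPointU M₀ K + contractionQ M₀ K * (u - fixedPointU M₀ K) := by
  rw [contractionQ_eq_div, fixedPointU_eq_sq]
  exact add_mul_sqrt_le_sq_add_mul_sub hK.le (fixedPointRoot_pos hK)
    add_mul_fixedPointRoot_le_sq hu

end FixedPoint

theorem recursion_geometric_convergence_general (M₀ K : ℝ) (hK : 0 < K)
    (a : ℕ → ℝ) (hnn : ∀ t, 0 ≤ a t)
    (hrec : ∀ t : ℕ, a (t + 1) ≤ M₀ + K * Real.sqrt (a t)) :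
    ∀ T : ℕ, a T ≤ fixedPointU M₀ K + contractionQ M₀ K ^ T * (a 0 - fixedPointU M₀ K) := by
  intro T
  have hq : 0 ≤ contractionQ M₀ K := by unfold contractionQ; positivity
  have h_contract (t : ℕ) (_ : t < T) :
      a (t + 1) - fixedPointU M₀ K ≤ contractionQ M₀ K * (a t - fixedPointU M₀ K) := by
    linarith [hrec t, add_mul_sqrt_le_fixedPointU_add (M₀ := M₀) hK (hnn t)]
  linarith [le_geom (u := fun t ↦ a t - fixedPointU M₀ K) hq T h_contract]

/-- Geometric convergence of the recursion: if `a₀ ≥ U`, `a_t ≥ 0`, and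
`a_t ≤ M₀ + K√(a_{t−1})` for all `t ≥ 1`, then `a_T ≤ U + q^T (a₀ − U)` for all `T`. -/
theorem recursion_geometric_convergence (M₀ K : ℝ) (hM : 0 < M₀) (hK : 0 < K)
    (a : ℕ → ℝ) (hnn : ∀ t, 0 ≤ a t) (ha0 : fixedPointU M₀ K ≤ a 0)
    (hrec : ∀ t : ℕ, a (t + 1) ≤ M₀ + K * Real.sqrt (a t)) :
    ∀ T : ℕ, a T ≤ fixedPointU M₀ K + contractionQ M₀ K ^ T * (a 0 - fixedPointU M₀ K) :=
  recursion_geometric_convergence_general M₀ K hK a hnn hrec
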